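/- Let K be a field of characteristic zero and q₁, q₂ ∈ K. Let V_n ⊆ S_n denote the K-linear span of all iterated shuffle products f₁ * f₂ * ⋯ * f_n with each f_i a one-variable Laurent polynomial over K. Then V_n is closed under multiplication by symmetric Laurent polynomials: for every symmetric Laurent polynomial g in z₁,…,z_n and every F ∈ V_n, the ordinary product g·F again lies in V_n. -/
import Mathlib


open MvPolynomial

noncomputable section ShuffleAlgebra

variable (K : Type) [Field K]

/-- The field of rational functions in countably many variables `z 0, z 1, …` over `K`. -/
abbrev RF := FractionRing (MvPolynomial ℕ K)

/-- The variable `z i` as a rational function. -/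
def Z (i : ℕ) : RF K := algebraMap (MvPolynomial ℕ K) (RF K) (X i)

/-- A constant, viewed as a rational function. -/
def cst (q : K) : RF K := algebraMap (MvPolynomial ℕ K) (RF K) (C q)

/-- Substitution `z i ↦ z (f i)` for an injective `f`, as a ring homomorphism of
rational functions. -/
def ren (f : ℕ → ℕ) (hf : Function.Injective f) : RF K →+* RF K :=
  IsFractionRing.lift (g := (algebraMap (MvPolynomial ℕ K) (RF K)).comp (rename f).toRingHom)
    ((IsFractionRing.injective (MvPolynomial ℕ K) (RF K)).comp (rename_injective f hf))

/-- A permutation of `Fin k` extended (by the identity) to a permutation of `ℕ`. -/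
def natPerm (k : ℕ) (σ : Equiv.Perm (Fin k)) : Equiv.Perm ℕ :=
  σ.extendDomain Fin.equivSubtype

/-- `Alt_{S_k}(F) = (1/k!) ∑_{σ ∈ S_k} sgn(σ) F(z_{σ(1)},…,z_{σ(k)})`. -/
def Alt (k : ℕ) (F : RF K) : RF K :=
  (k.factorial : RF K)⁻¹ *
    ∑ σ : Equiv.Perm (Fin k),
      ((Equiv.Perm.sign σ : ℤ) : RF K) * ren K (natPerm k σ) (natPerm k σ).injective F

variable (q₁ q₂ : K)

/-- `μ(x,y) = (x − q₁y)(x − q₂y)/(x − y)²`. -/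
def mu (x y : RF K) : RF K := (x - cst K q₁ * y) * (x - cst K q₂ * y) / (x - y) ^ 2

/-- The shuffle product of `F` (a function of `z 0, …, z (n-1)`) and `G`
(a function of `z 0, …, z (m-1)`). -/
def shuffle (n m : ℕ) (F G : RF K) : RF K :=
  Alt K (n + m) (F * ren K (· + n) (add_left_injective n) G *
    ∏ i : Fin n, ∏ j : Fin m, mu K q₁ q₂ (Z K i.val) (Z K (n + j.val)))

/-- The Vandermonde determinant `Δ_n = ∏_{i<j} (z i − z j)`. -/
def vand (n : ℕ) : RF K :=
  algebraMap (MvPolynomial ℕ K) (RF K)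
    (∏ j ∈ Finset.range n, ∏ i ∈ Finset.range j, (X i - X j))

/-- `f` is a symmetric Laurent polynomial in the variables `z 0, …, z (n-1)`. -/
def IsSymLaurent (n : ℕ) (f : RF K) : Prop :=
  (∃ (p : MvPolynomial ℕ K) (N : ℕ), (↑p.vars : Set ℕ) ⊆ Set.Iio n ∧
      f * algebraMap (MvPolynomial ℕ K) (RF K) ((∏ i ∈ Finset.range n, X i) ^ N)
        = algebraMap (MvPolynomial ℕ K) (RF K) p) ∧
  ∀ σ : Equiv.Perm (Fin n), ren K (natPerm n σ) (natPerm n σ).injective f = f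

/-- The `n`-th graded component `S_n` of the shuffle algebra: quotients `f/Δ_n` with
`f` a symmetric Laurent polynomial in `z 0, …, z (n-1)`. -/
def Sgr (n : ℕ) : Set (RF K) :=
  {F | ∃ f : RF K, IsSymLaurent K n f ∧ F = f / vand K n}

/-- Iterated (left-to-right) shuffle product of a list of elements of `S₁`. -/
def iterSh (l : List (RF K)) : RF K :=
  (l.foldl (fun acc f => (shuffle K q₁ q₂ acc.2 1 acc.1 f, acc.2 + 1)) ((1 : RF K), 0)).1

/-- The iterated shuffle product `z^{i₁} * ⋯ * z^{i_n}`. -/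
def zpows (l : List ℤ) : RF K := iterSh K q₁ q₂ (l.map fun i => Z K 0 ^ i)

/-- `F` is defined at the point `α` and its value there is `v`. -/
def EvalAt (α : ℕ → K) (F : RF K) (v : K) : Prop :=
  ∃ p q : MvPolynomial ℕ K, eval α q ≠ 0 ∧
    F * algebraMap (MvPolynomial ℕ K) (RF K) q = algebraMap (MvPolynomial ℕ K) (RF K) p ∧
    eval α p = v * eval α q

end ShuffleAlgebra

/-- The `K`-linear span `V_n` of all iterated shuffle products `f₁ * ⋯ * f_n` with each
`f_i` a one-variable Laurent polynomial. -/
def Vset (K : Type) [Field K] (q₁ q₂ : K) (n : ℕ) : Set (RF K) :=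
  {F | ∃ (t : Finset (List (RF K))) (c : List (RF K) → K),
    (∀ l ∈ t, l.length = n ∧ ∀ f ∈ l, IsSymLaurent K 1 f) ∧
    F = ∑ l ∈ t, cst K (c l) * iterSh K q₁ q₂ l}

noncomputable section Aux

set_option maxHeartbeats 1000000
set_option synthInstance.maxHeartbeats 1000000

open MvPolynomial

variable {K : Type} [Field K]

private lemma ren_alg (f : ℕ → ℕ) (hf : Function.Injective f) (p : MvPolynomial ℕ K) :
    ren K f hf (algebraMap _ (RF K) p) = algebraMap _ (RF K) (rename f p) := by
  simp [ren, IsFractionRing.lift_algebraMap]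

private lemma ren_Z (f : ℕ → ℕ) (hf : Function.Injective f) (i : ℕ) :
    ren K f hf (Z K i) = Z K (f i) := by
  simp [Z, ren_alg]

private lemma ren_cst (f : ℕ → ℕ) (hf : Function.Injective f) (q : K) :
    ren K f hf (cst K q) = cst K q := by
  simp [cst, ren_alg]

private lemma cst_eq_algebraMap (q : K) : cst K q = algebraMap K (RF K) q := by
  rw [cst, IsScalarTower.algebraMap_apply K (MvPolynomial ℕ K) (RF K), algebraMap_eq]

private lemma cst_mul_eq_smul (q : K) (x : RF K) : cst K q * x = q • x := by
  rw [cst_eq_algebraMap, Algebra.smul_def]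

private lemma natPerm_lt {k : ℕ} (σ : Equiv.Perm (Fin k)) {i : ℕ} (h : i < k) :
    natPerm k σ i = (σ ⟨i, h⟩ : Fin k).val := by
  have : (Fin.equivSubtype (⟨i, h⟩ : Fin k) : ℕ) = i := rfl
  have h2 := Equiv.Perm.extendDomain_apply_subtype σ Fin.equivSubtype (p := fun i => i < k) h
  simpa [natPerm, Fin.equivSubtype] using h2

private lemma natPerm_ge {k : ℕ} (σ : Equiv.Perm (Fin k)) {i : ℕ} (h : ¬ i < k) :
    natPerm k σ i = i :=
  Equiv.Perm.extendDomain_apply_not_subtype σ Fin.equivSubtype h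

/-- Invariance under the permutations used in `Alt k`. -/
def RInv (k : ℕ) (g : RF K) : Prop :=
  ∀ σ : Equiv.Perm (Fin k), ren K (natPerm k σ) (natPerm k σ).injective g = g

private lemma Alt_add (k : ℕ) (F G : RF K) : Alt K k (F + G) = Alt K k F + Alt K k G := by
  unfold Alt
  rw [← mul_add, ← Finset.sum_add_distrib]
  congr 1
  refine Finset.sum_congr rfl fun σ _ => ?_
  rw [map_add]
  ring

private lemma Alt_mul_left {k : ℕ} {g : RF K} (hg : RInv k g) (F : RF K) :
    Alt K k (g * F) = g * Alt K k F := by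
  have h : ∀ σ : Equiv.Perm (Fin k),
      ((Equiv.Perm.sign σ : ℤ) : RF K) *
        ren K (natPerm k σ) (natPerm k σ).injective (g * F) =
      g * (((Equiv.Perm.sign σ : ℤ) : RF K) *
        ren K (natPerm k σ) (natPerm k σ).injective F) := by
    intro σ
    rw [map_mul, hg σ]
    ring
  unfold Alt
  rw [Finset.sum_congr rfl (fun σ _ => h σ), ← Finset.mul_sum]
  ring

private lemma RInv_cst (k : ℕ) (q : K) : RInv k (cst K q) := fun σ => ren_cst _ _ q

private lemma Alt_cst (k : ℕ) (q : K) (F : RF K) :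
    Alt K k (cst K q * F) = cst K q * Alt K k F := Alt_mul_left (RInv_cst k q) F

/-- Power sums (with integer exponents) in the variables `z 0, …, z (n-1)`. -/
def pz (n : ℕ) (k : ℤ) : RF K := ∑ i ∈ Finset.range n, Z K i ^ k

private lemma RInv_pz (n : ℕ) (k : ℤ) : RInv n (pz (K := K) n k) := by
  intro σ
  unfold pz
  rw [← Fin.sum_univ_eq_sum_range (fun i => Z K i ^ k) n, map_sum]
  rw [← Equiv.sum_comp σ (fun i : Fin n => Z K i.val ^ k)]
  refine Finset.sum_congr rfl fun i _ => ?_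
  rw [map_zpow₀, ren_Z, natPerm_lt σ i.isLt]

private lemma pz_succ (n : ℕ) (k : ℤ) :
    pz (K := K) (n+1) k = pz n k + Z K n ^ k := by
  simp [pz, Finset.sum_range_succ]

end Aux
section Aux2

open MvPolynomial

variable {K : Type} [Field K]

private lemma shuffle_add_left (q₁ q₂ : K) (n m : ℕ) (F F' G : RF K) :
    shuffle K q₁ q₂ n m (F + F') G = shuffle K q₁ q₂ n m F G + shuffle K q₁ q₂ n m F' G := by
  unfold shuffle
  rw [← Alt_add]
  congr 1
  ring

private lemma shuffle_cst_left (q₁ q₂ : K) (n m : ℕ) (c : K) (F G : RF K) :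
    shuffle K q₁ q₂ n m (cst K c * F) G = cst K c * shuffle K q₁ q₂ n m F G := by
  unfold shuffle
  rw [← Alt_cst]
  congr 1
  ring

private lemma shuffle_pz (q₁ q₂ : K) (m : ℕ) (k : ℤ) (F f : RF K) :
    pz (m + 1) k * shuffle K q₁ q₂ m 1 F f =
      shuffle K q₁ q₂ m 1 (pz m k * F) f + shuffle K q₁ q₂ m 1 F (Z K 0 ^ k * f) := by
  unfold shuffle
  rw [← Alt_mul_left (RInv_pz (m + 1) k), ← Alt_add]
  congr 1
  have h1 : ren K (· + m) (add_left_injective m) (Z K 0 ^ k * f)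
      = Z K m ^ k * ren K (· + m) (add_left_injective m) f := by
    rw [map_mul, map_zpow₀, ren_Z]
    norm_num
  rw [h1, pz_succ]
  ring

private lemma foldl_snd (q₁ q₂ : K) (l : List (RF K)) (a : RF K) (c : ℕ) :
    (l.foldl (fun acc f => (shuffle K q₁ q₂ acc.2 1 acc.1 f, acc.2 + 1)) (a, c)).2
      = c + l.length := by
  induction l generalizing a c with
  | nil => simp
  | cons x xs ih => simp [List.foldl_cons, ih]; omega

private lemma iterSh_snoc (q₁ q₂ : K) (l : List (RF K)) (f : RF K) :
    iterSh K q₁ q₂ (l ++ [f]) =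
      shuffle K q₁ q₂ l.length 1 (iterSh K q₁ q₂ l) f := by
  unfold iterSh
  rw [List.foldl_append]
  have := foldl_snd q₁ q₂ l (1 : RF K) 0
  simp only [List.foldl_cons, List.foldl_nil]
  rw [this]
  norm_num

private lemma iterSh_nil (q₁ q₂ : K) : iterSh K q₁ q₂ [] = 1 := rfl

end Aux2
section Aux3

open MvPolynomial

variable {K : Type} [Field K]

/-- Generators of `V_n`. -/
def goodSet (q₁ q₂ : K) (n : ℕ) : Set (RF K) :=
  {F | ∃ l : List (RF K), l.length = n ∧ (∀ f ∈ l, IsSymLaurent K 1 f) ∧ F = iterSh K q₁ q₂ l}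

private lemma Vset_eq_span (q₁ q₂ : K) (n : ℕ) :
    Vset K q₁ q₂ n = ↑(Submodule.span K (goodSet q₁ q₂ n)) := by
  ext F
  constructor
  · rintro ⟨t, c, h, rfl⟩
    refine Submodule.sum_mem _ fun l hl => ?_
    rw [cst_mul_eq_smul]
    exact Submodule.smul_mem _ _ (Submodule.subset_span ⟨l, (h l hl).1, (h l hl).2, rfl⟩)
  · intro hF
    obtain ⟨c, hsupp, hsum⟩ := Submodule.mem_span_set.mp hF
    classical
    set gl : RF K → List (RF K) := fun x =>
      if h : x ∈ goodSet q₁ q₂ n then h.choose else [] with hgl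
    have hgood : ∀ x ∈ c.support, x ∈ goodSet q₁ q₂ n := fun x hx => hsupp hx
    have hiter : ∀ x ∈ c.support, iterSh K q₁ q₂ (gl x) = x := by
      intro x hx
      have hg := hgood x hx
      simp only [hgl, dif_pos hg]
      exact hg.choose_spec.2.2.symm
    have hlen : ∀ x ∈ c.support, (gl x).length = n ∧ ∀ f ∈ gl x, IsSymLaurent K 1 f := by
      intro x hx
      have hg := hgood x hx
      simp only [hgl, dif_pos hg]
      exact ⟨hg.choose_spec.1, hg.choose_spec.2.1⟩
    have hinj : Set.InjOn gl c.support := by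
      intro x hx y hy hxy
      rw [← hiter x hx, ← hiter y hy, hxy]
    refine ⟨c.support.image gl, fun l => c (iterSh K q₁ q₂ l), ?_, ?_⟩
    · intro l hl
      obtain ⟨x, hx, rfl⟩ := Finset.mem_image.mp hl
      exact hlen x hx
    · rw [Finset.sum_image (fun x hx y hy h => hinj hx hy h)]
      rw [← hsum, Finsupp.sum]
      refine Finset.sum_congr rfl fun x hx => ?_
      beta_reduce
      rw [hiter x hx, cst_mul_eq_smul]

private lemma Vset_zero (q₁ q₂ : K) (n : ℕ) : (0 : RF K) ∈ Vset K q₁ q₂ n := by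
  rw [Vset_eq_span]; exact Submodule.zero_mem _

private lemma Vset_add (q₁ q₂ : K) (n : ℕ) {F G : RF K} (hF : F ∈ Vset K q₁ q₂ n)
    (hG : G ∈ Vset K q₁ q₂ n) : F + G ∈ Vset K q₁ q₂ n := by
  rw [Vset_eq_span] at *
  exact Submodule.add_mem _ hF hG

private lemma Vset_smul (q₁ q₂ : K) (n : ℕ) (a : K) {F : RF K} (hF : F ∈ Vset K q₁ q₂ n) :
    a • F ∈ Vset K q₁ q₂ n := by
  rw [Vset_eq_span] at *
  exact Submodule.smul_mem _ _ hF

private lemma shuffle_zero_left (q₁ q₂ : K) (n m : ℕ) (G : RF K) :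
    shuffle K q₁ q₂ n m 0 G = 0 := by
  have h := shuffle_add_left q₁ q₂ n m 0 0 G
  rw [add_zero] at h
  exact (left_eq_add.mp h)

/-- Appending a fixed good one–variable factor maps `span (goodSet n)` to
`span (goodSet (n+1))`. -/
private lemma shuffle_span (q₁ q₂ : K) (n : ℕ) {f : RF K} (hf : IsSymLaurent K 1 f)
    {F : RF K} (hF : F ∈ Submodule.span K (goodSet q₁ q₂ n)) :
    shuffle K q₁ q₂ n 1 F f ∈ Submodule.span K (goodSet q₁ q₂ (n + 1)) := by
  induction hF using Submodule.span_induction with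
  | mem x hx =>
    obtain ⟨l, hl, hlf, rfl⟩ := hx
    refine Submodule.subset_span ⟨l ++ [f], ?_, ?_, ?_⟩
    · simp [hl]
    · intro g hg
      rcases List.mem_append.mp hg with h | h
      · exact hlf g h
      · rw [List.mem_singleton.mp h]; exact hf
    · rw [iterSh_snoc, hl]
  | zero => rw [shuffle_zero_left]; exact Submodule.zero_mem _
  | add x y _ _ hx hy => rw [shuffle_add_left]; exact Submodule.add_mem _ hx hy
  | smul a x _ hx =>
    rw [← cst_mul_eq_smul, shuffle_cst_left, cst_mul_eq_smul]
    exact Submodule.smul_mem _ _ hx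

private lemma pz_mul_good (q₁ q₂ : K) :
    ∀ (n : ℕ) (k : ℤ) (l : List (RF K)), l.length = n → (∀ f ∈ l, IsSymLaurent K 1 f) →
      (∀ f, IsSymLaurent K 1 f → IsSymLaurent K 1 (Z K 0 ^ k * f)) →
      pz n k * iterSh K q₁ q₂ l ∈ Submodule.span K (goodSet q₁ q₂ n) := by
  intro n
  induction n with
  | zero =>
    intro k l hl _ _
    have : pz (K := K) 0 k = 0 := by simp [pz]
    rw [this, zero_mul]
    exact Submodule.zero_mem _
  | succ n ih =>
    intro k l hl hlf hzk
    have hne : l ≠ [] := by intro h; rw [h] at hl; simp at hl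
    obtain ⟨l', f, rfl⟩ : ∃ l' f, l = l' ++ [f] :=
      ⟨l.dropLast, l.getLast hne, (List.dropLast_append_getLast hne).symm⟩
    have hl' : l'.length = n := by simpa using hl
    have hlf' : ∀ g ∈ l', IsSymLaurent K 1 g := fun g hg => hlf g (List.mem_append_left _ hg)
    have hfL : IsSymLaurent K 1 f := hlf f (List.mem_append_right _ (List.mem_singleton_self f))
    rw [iterSh_snoc, hl', shuffle_pz]
    refine Submodule.add_mem _ ?_ ?_
    · have h1 : pz n k * iterSh K q₁ q₂ l' ∈ Submodule.span K (goodSet q₁ q₂ n) :=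
        ih k l' hl' hlf' hzk
      exact shuffle_span q₁ q₂ n hfL h1
    · have h2 : iterSh K q₁ q₂ l' ∈ Submodule.span K (goodSet q₁ q₂ n) :=
        Submodule.subset_span ⟨l', hl', hlf', rfl⟩
      exact shuffle_span q₁ q₂ n (hzk f hfL) h2

private lemma pz_mul_mem (q₁ q₂ : K) (n : ℕ) (k : ℤ)
    (hzk : ∀ f, IsSymLaurent K 1 f → IsSymLaurent K 1 (Z K 0 ^ k * f))
    {F : RF K} (hF : F ∈ Vset K q₁ q₂ n) : pz n k * F ∈ Vset K q₁ q₂ n := by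
  rw [Vset_eq_span] at *
  induction hF using Submodule.span_induction with
  | mem x hx =>
    obtain ⟨l, hl, hlf, rfl⟩ := hx
    exact pz_mul_good q₁ q₂ n k l hl hlf hzk
  | zero => rw [mul_zero]; exact Submodule.zero_mem _
  | add x y _ _ hx hy => rw [mul_add]; exact Submodule.add_mem _ hx hy
  | smul a x _ hx => rw [mul_smul_comm]; exact Submodule.smul_mem _ _ hx

end Aux3
section Aux4

open MvPolynomial

variable {K : Type} [Field K]

private lemma ren_ext (f g : ℕ → ℕ) (hf : Function.Injective f) (hg : Function.Injective g)
    (h : ∀ i, f i = g i) (x : RF K) : ren K f hf x = ren K g hg x := by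
  have : f = g := funext h
  subst this
  rfl

private lemma ren_eq_id (f : ℕ → ℕ) (hf : Function.Injective f) (h : ∀ i, f i = i) (x : RF K) :
    ren K f hf x = x := by
  have hid : ren K f hf = RingHom.id (RF K) := by
    apply IsLocalization.ringHom_ext (nonZeroDivisors (MvPolynomial ℕ K))
    ext p
    all_goals simp only [RingHom.comp_apply, RingHom.id_apply, ren_alg]
    · rw [rename_C]
    · rw [rename_X, h p]
  rw [hid]
  rfl

private lemma natPerm_one_apply (σ : Equiv.Perm (Fin 1)) (i : ℕ) : natPerm 1 σ i = i := by
  have : σ = 1 := Subsingleton.elim σ 1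
  subst this
  rcases Nat.lt_or_ge i 1 with h | h
  · rw [natPerm_lt 1 h]
    omega
  · exact natPerm_ge 1 (by omega)

private lemma isSymLaurent_one_iff (f : RF K) :
    IsSymLaurent K 1 f ↔ ∃ (p : MvPolynomial ℕ K) (N : ℕ), (↑p.vars : Set ℕ) ⊆ Set.Iio 1 ∧
      f * algebraMap (MvPolynomial ℕ K) (RF K) ((∏ i ∈ Finset.range 1, X i) ^ N)
        = algebraMap (MvPolynomial ℕ K) (RF K) p := by
  constructor
  · rintro ⟨h, _⟩; exact h
  · intro h
    refine ⟨h, fun σ => ren_eq_id _ _ (natPerm_one_apply σ) f⟩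

private lemma Z_ne_zero (i : ℕ) : Z K i ≠ 0 := by
  intro h
  have := (map_eq_zero_iff _ (IsFractionRing.injective (MvPolynomial ℕ K) (RF K))).mp h
  exact X_ne_zero (R := K) (s := i) this

private lemma isSymLaurent_one_zpow (k : ℤ) : IsSymLaurent K 1 (Z K 0 ^ k) := by
  rw [isSymLaurent_one_iff]
  have hz : algebraMap (MvPolynomial ℕ K) (RF K) (∏ i ∈ Finset.range 1, X i) = Z K 0 := by
    rw [Finset.prod_range_one]; rfl
  rcases le_or_gt 0 k with hk | hk
  · refine ⟨X 0 ^ k.toNat, 0, ?_, ?_⟩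
    · refine Set.Subset.trans (Finset.coe_subset.mpr (vars_pow _ _)) ?_
      intro i hi
      simp only [Finset.coe_subset, vars_X] at hi ⊢
      simp at hi
      simp [hi, Set.mem_Iio]
    · rw [pow_zero, map_one, mul_one, map_pow]
      rw [show Z K 0 ^ k = Z K 0 ^ (k.toNat : ℤ) by rw [Int.toNat_of_nonneg hk]]
      rw [zpow_natCast]
      rfl
  · refine ⟨1, (-k).toNat, ?_, ?_⟩
    · simp
    · rw [map_pow, hz, map_one]
      rw [← zpow_natCast (Z K 0) (-k).toNat, ← zpow_add₀ (Z_ne_zero 0)]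
      have : k + ((-k).toNat : ℤ) = 0 := by omega
      rw [this, zpow_zero]

private lemma isSymLaurent_one_mul {f g : RF K} (hf : IsSymLaurent K 1 f)
    (hg : IsSymLaurent K 1 g) : IsSymLaurent K 1 (f * g) := by
  rw [isSymLaurent_one_iff] at *
  obtain ⟨p, N, hp, hep⟩ := hf
  obtain ⟨r, M, hr, her⟩ := hg
  refine ⟨p * r, N + M, ?_, ?_⟩
  · refine Set.Subset.trans (Finset.coe_subset.mpr (vars_mul _ _)) ?_
    rw [Finset.coe_union]
    exact Set.union_subset hp hr
  · rw [pow_add, map_mul, map_mul]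
    calc f * g * (algebraMap (MvPolynomial ℕ K) (RF K) ((∏ i ∈ Finset.range 1, X i) ^ N) *
          algebraMap (MvPolynomial ℕ K) (RF K) ((∏ i ∈ Finset.range 1, X i) ^ M))
        = (f * algebraMap (MvPolynomial ℕ K) (RF K) ((∏ i ∈ Finset.range 1, X i) ^ N)) *
          (g * algebraMap (MvPolynomial ℕ K) (RF K) ((∏ i ∈ Finset.range 1, X i) ^ M)) := by ring
      _ = _ := by rw [hep, her]

private lemma isSymLaurent_zpow_mul (k : ℤ) (f : RF K) (hf : IsSymLaurent K 1 f) :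
    IsSymLaurent K 1 (Z K 0 ^ k * f) :=
  isSymLaurent_one_mul (isSymLaurent_one_zpow k) hf

end Aux4
section Aux5

open MvPolynomial

variable {K : Type} [Field K]

/-- The set of multipliers preserving `V_n`, as a subalgebra. -/
def Msub (q₁ q₂ : K) (n : ℕ) : Subalgebra K (RF K) where
  carrier := {g | ∀ F ∈ Vset K q₁ q₂ n, g * F ∈ Vset K q₁ q₂ n}
  mul_mem' := by
    intro a b ha hb F hF
    rw [mul_assoc]
    exact ha _ (hb _ hF)
  add_mem' := by
    intro a b ha hb F hF
    rw [add_mul]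
    exact Vset_add _ _ _ (ha F hF) (hb F hF)
  algebraMap_mem' := by
    intro a F hF
    rw [← Algebra.smul_def]
    exact Vset_smul _ _ _ a hF

private lemma pz_mem_Msub (q₁ q₂ : K) (n : ℕ) (k : ℤ) : pz n k ∈ Msub q₁ q₂ n :=
  fun _ hF => pz_mul_mem q₁ q₂ n k (fun f hf => isSymLaurent_zpow_mul k f hf) hF

end Aux5
section Aux6

open MvPolynomial

variable {K : Type} [Field K] [CharZero K]

private lemma esymm_mem_adjoin (m : ℕ) :
    ∀ j : ℕ, esymm (Fin m) K j ∈ Algebra.adjoin K (Set.range (psum (Fin m) K)) := by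
  intro j
  induction j using Nat.strong_induction_on with
  | _ j ih =>
    rcases Nat.eq_zero_or_pos j with rfl | hj
    · rw [esymm_zero]
      exact Subalgebra.one_mem _
    · have hnewton := mul_esymm_eq_sum (Fin m) K j
      have hjK : ((j : K) : K) ≠ 0 := Nat.cast_ne_zero.mpr hj.ne'
      have hiso : esymm (Fin m) K j = C ((j : K)⁻¹) * ((j : MvPolynomial (Fin m) K) *
          esymm (Fin m) K j) := by
        rw [show ((j : MvPolynomial (Fin m) K)) = C ((j : K)) by rw [map_natCast]]
        rw [← mul_assoc, ← map_mul, inv_mul_cancel₀ hjK, map_one, one_mul]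
      rw [hiso, hnewton]
      refine Subalgebra.mul_mem _ ?_ (Subalgebra.mul_mem _ ?_ ?_)
      · rw [← algebraMap_eq]
        exact Subalgebra.algebraMap_mem _ _
      · exact Subalgebra.pow_mem _ (Subalgebra.neg_mem _ (Subalgebra.one_mem _)) _
      · refine Subalgebra.sum_mem _ fun a ha => ?_
        have ha1 : a.1 < j := (Finset.mem_filter.mp ha).2
        refine Subalgebra.mul_mem _ (Subalgebra.mul_mem _ ?_ (ih a.1 ha1)) ?_
        · exact Subalgebra.pow_mem _ (Subalgebra.neg_mem _ (Subalgebra.one_mem _)) _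
        · exact Algebra.subset_adjoin ⟨a.2, rfl⟩

private lemma isSymmetric_mem_adjoin {m : ℕ} (p : MvPolynomial (Fin m) K)
    (hp : p.IsSymmetric) : p ∈ Algebra.adjoin K (Set.range (psum (Fin m) K)) := by
  obtain ⟨q, hq⟩ := esymmAlgHom_fin_surjective (R := K) (le_refl m) ⟨p, hp⟩
  have hpq : p = aeval (fun i : Fin m => esymm (Fin m) K (i + 1)) q := by
    have := congrArg Subtype.val hq
    rw [esymmAlgHom_apply] at this
    exact this.symm
  have h1 : p ∈ Algebra.adjoin K
      (Set.range fun i : Fin m => esymm (Fin m) K (i + 1)) := by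
    rw [Algebra.adjoin_range_eq_range_aeval, AlgHom.mem_range]
    exact ⟨q, hpq.symm⟩
  refine (Algebra.adjoin_le ?_) h1
  rintro x ⟨i, rfl⟩
  exact esymm_mem_adjoin m (i + 1)

/-- Evaluation of a symmetric polynomial lands in the adjoin of evaluated power sums. -/
private lemma aeval_isSymmetric_mem {m : ℕ} (w : Fin m → RF K) (p : MvPolynomial (Fin m) K)
    (hp : p.IsSymmetric) :
    aeval w p ∈ Algebra.adjoin K (Set.range fun j : ℕ => ∑ i : Fin m, w i ^ j) := by
  have h1 := isSymmetric_mem_adjoin p hp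
  have h2 : aeval w p ∈ (Algebra.adjoin K (Set.range (psum (Fin m) K))).map (aeval w) :=
    Subalgebra.mem_map.mpr ⟨p, h1, rfl⟩
  rw [AlgHom.map_adjoin] at h2
  refine (Algebra.adjoin_le ?_) h2
  rintro x ⟨y, ⟨j, rfl⟩, rfl⟩
  refine Algebra.subset_adjoin ⟨j, ?_⟩
  simp [psum, map_sum]

end Aux6
section Aux7

open MvPolynomial

variable {K : Type} [Field K]

private lemma alg_eq_aeval (r : MvPolynomial ℕ K) :
    algebraMap (MvPolynomial ℕ K) (RF K) r = aeval (Z K) r := by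
  have h := aeval_unique (IsScalarTower.toAlgHom K (MvPolynomial ℕ K) (RF K))
  calc algebraMap (MvPolynomial ℕ K) (RF K) r
      = (IsScalarTower.toAlgHom K (MvPolynomial ℕ K) (RF K)) r := rfl
    _ = aeval (⇑(IsScalarTower.toAlgHom K (MvPolynomial ℕ K) (RF K)) ∘ X) r := by rw [← h]
    _ = aeval (Z K) r := rfl

private lemma rename_prodX (n : ℕ) (σ : Equiv.Perm (Fin n)) :
    rename (⇑(natPerm n σ)) (∏ i ∈ Finset.range n, X i : MvPolynomial ℕ K)
      = ∏ i ∈ Finset.range n, X i := by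
  rw [map_prod]
  simp only [rename_X]
  rw [← Fin.prod_univ_eq_prod_range (fun i => (X (natPerm n σ i) : MvPolynomial ℕ K)) n,
      ← Fin.prod_univ_eq_prod_range (fun i => (X i : MvPolynomial ℕ K)) n]
  rw [← Equiv.prod_comp σ (fun i : Fin n => (X i.val : MvPolynomial ℕ K))]
  refine Finset.prod_congr rfl fun i _ => ?_
  rw [natPerm_lt σ i.isLt]

private lemma esymm_top (n : ℕ) : esymm (Fin n) K n = ∏ i : Fin n, X i := by
  have h : Finset.powersetCard n (Finset.univ : Finset (Fin n)) = {Finset.univ} := by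
    have := Finset.powersetCard_self (Finset.univ : Finset (Fin n))
    simpa using this
  rw [esymm, h, Finset.sum_singleton]

private lemma sum_pow_eq_pz (n j : ℕ) :
    pz (K := K) n (j : ℤ) = ∑ i : Fin n, Z K i.val ^ j := by
  rw [pz, ← Fin.sum_univ_eq_sum_range (fun i => Z K i ^ (j : ℤ)) n]
  exact Finset.sum_congr rfl fun i _ => zpow_natCast _ j

private lemma sum_inv_pow_eq_pz (n j : ℕ) :
    pz (K := K) n (-(j : ℤ)) = ∑ i : Fin n, ((Z K i.val)⁻¹) ^ j := by
  rw [pz, ← Fin.sum_univ_eq_sum_range (fun i => Z K i ^ (-(j : ℤ))) n]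
  refine Finset.sum_congr rfl fun i _ => ?_
  rw [inv_pow, ← zpow_natCast (Z K i.val) j, ← zpow_neg]

private lemma mem_Msub_iff (q₁ q₂ : K) (n : ℕ) (g : RF K) :
    g ∈ Msub q₁ q₂ n ↔ ∀ F ∈ Vset K q₁ q₂ n, g * F ∈ Vset K q₁ q₂ n := Iff.rfl

end Aux7
/-- `V_n` is closed under multiplication by symmetric Laurent
polynomials. -/
theorem Vset_mul_symLaurent (K : Type) [Field K] [CharZero K] (q₁ q₂ : K) (n : ℕ)
    (g : RF K) (hg : IsSymLaurent K n g) (F : RF K) (hF : F ∈ Vset K q₁ q₂ n) :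
    g * F ∈ Vset K q₁ q₂ n := by
  classical
  open MvPolynomial in
  suffices hmem : g ∈ Algebra.adjoin K (Set.range (pz (K := K) n)) by
    have hle : Algebra.adjoin K (Set.range (pz (K := K) n)) ≤ Msub q₁ q₂ n :=
      Algebra.adjoin_le (by rintro x ⟨k, rfl⟩; exact pz_mem_Msub q₁ q₂ n k)
    exact (mem_Msub_iff q₁ q₂ n g).mp (hle hmem) F hF
  open MvPolynomial in
  obtain ⟨⟨p, N, hvars, heq⟩, hinv⟩ := hg
  have hAinj : Function.Injective (algebraMap (MvPolynomial ℕ K) (RF K)) :=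
    IsFractionRing.injective _ _
  -- `p` is invariant under all the permutations `natPerm n σ`.
  have hrenp : ∀ σ : Equiv.Perm (Fin n), rename (⇑(natPerm n σ)) p = p := by
    intro σ
    have h1 := congrArg (⇑(ren K (natPerm n σ) (natPerm n σ).injective)) heq
    rw [map_mul, hinv σ, ren_alg, ren_alg, map_pow, rename_prodX, heq] at h1
    exact (hAinj h1).symm
  -- `p` comes from a symmetric polynomial `p'` in `Fin n` variables.
  have hsup : p ∈ supported K (Set.Iio n) := mem_supported.mpr hvars
  rw [supported_eq_range_rename, AlgHom.mem_range] at hsup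
  obtain ⟨p₂, hp₂⟩ := hsup
  let e₀ : Fin n ≃ ↥(Set.Iio n) :=
    ⟨fun i => ⟨i.val, i.isLt⟩, fun x => ⟨x.val, x.2⟩, fun i => rfl, fun x => rfl⟩
  set p' : MvPolynomial (Fin n) K := rename (⇑e₀.symm) p₂ with hp'def
  have hvp' : rename (fun i : Fin n => (i.val : ℕ)) p' = p := by
    rw [hp'def, rename_rename]
    rw [show ((fun i : Fin n => (i.val : ℕ)) ∘ ⇑e₀.symm)
      = (Subtype.val : ↥(Set.Iio n) → ℕ) from rfl]
    exact hp₂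
  have hp'sym : p'.IsSymmetric := by
    intro τ
    refine rename_injective _ (Fin.val_injective) ?_
    have hcomp : (fun i : Fin n => (i.val : ℕ)) ∘ ⇑τ
        = ⇑(natPerm n τ) ∘ (fun i : Fin n => (i.val : ℕ)) := by
      funext i
      simp only [Function.comp_apply]
      rw [natPerm_lt τ i.isLt]
    rw [rename_rename, hcomp, ← rename_rename, hvp', hrenp τ]
  -- `algebraMap p` as an `aeval` of `p'`.
  have halg : ∀ r : MvPolynomial (Fin n) K,
      algebraMap (MvPolynomial ℕ K) (RF K) (rename (fun i : Fin n => (i.val : ℕ)) r)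
        = aeval (fun i : Fin n => Z K i.val) r := by
    intro r
    rw [alg_eq_aeval, aeval_rename]
    rfl
  have hAp : algebraMap (MvPolynomial ℕ K) (RF K) p
      = aeval (fun i : Fin n => Z K i.val) p' := by
    rw [← hvp']
    exact halg p'
  -- membership of the numerator
  have h1 : algebraMap (MvPolynomial ℕ K) (RF K) p
      ∈ Algebra.adjoin K (Set.range (pz (K := K) n)) := by
    rw [hAp]
    refine (Algebra.adjoin_le ?_)
      (aeval_isSymmetric_mem (fun i : Fin n => Z K i.val) p' hp'sym)
    rintro x ⟨j, rfl⟩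
    exact Algebra.subset_adjoin ⟨(j : ℤ), sum_pow_eq_pz n j⟩
  -- membership of the inverse of the denominator
  have hAe_ne : algebraMap (MvPolynomial ℕ K) (RF K) (∏ i ∈ Finset.range n, X i) ≠ 0 := by
    rw [Ne, map_eq_zero_iff _ hAinj]
    exact Finset.prod_ne_zero_iff.mpr fun i _ => X_ne_zero i
  have hInv : (algebraMap (MvPolynomial ℕ K) (RF K) (∏ i ∈ Finset.range n, X i))⁻¹
      ∈ Algebra.adjoin K (Set.range (pz (K := K) n)) := by
    have hev : aeval (fun i : Fin n => (Z K i.val)⁻¹) (esymm (Fin n) K n)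
        = (algebraMap (MvPolynomial ℕ K) (RF K) (∏ i ∈ Finset.range n, X i))⁻¹ := by
      rw [esymm_top, map_prod]
      simp only [aeval_X]
      rw [map_prod, ← Fin.prod_univ_eq_prod_range
        (fun i => algebraMap (MvPolynomial ℕ K) (RF K) (X i)) n]
      rw [Finset.prod_inv_distrib]
      rfl
    rw [← hev]
    refine (Algebra.adjoin_le ?_)
      (aeval_isSymmetric_mem (fun i : Fin n => (Z K i.val)⁻¹) _ (esymm_isSymmetric _ K n))
    rintro x ⟨j, rfl⟩
    exact Algebra.subset_adjoin ⟨-(j : ℤ), sum_inv_pow_eq_pz n j⟩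
  -- conclude
  have hg_eq : g = algebraMap (MvPolynomial ℕ K) (RF K) p *
      ((algebraMap (MvPolynomial ℕ K) (RF K) (∏ i ∈ Finset.range n, X i))⁻¹) ^ N := by
    rw [← heq, map_pow, inv_pow, mul_assoc, mul_inv_cancel₀ (pow_ne_zero _ hAe_ne), mul_one]
  rw [hg_eq]
  exact Subalgebra.mul_mem _ h1 (Subalgebra.pow_mem _ hInv _)
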